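/- arXiv:1206.5350 — 2 statements merged into one kernel-verified Lean document; each statement's English description precedes it below -/
import Mathlib

section
/- For every nonnegative integer k, every good placement of queens on the n × n board B_n with n = 4k + 2 has size at least n. -/
/-- The n × n board: squares {1,…,n} × {1,…,n} ⊆ ℤ². -/
noncomputable def board (n : ℕ) : Finset (ℤ × ℤ) :=
  Finset.Icc (1 : ℤ) n ×ˢ Finset.Icc (1 : ℤ) n

/-- Two squares share a column, row, diagonal, or antidiagonal. -/
def SameLine (a b : ℤ × ℤ) : Prop :=
  a.1 = b.1 ∨ a.2 = b.2 ∨ a.1 - a.2 = b.1 - b.2 ∨ a.1 + a.2 = b.1 + b.2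

/-- A set of squares contains three (pairwise distinct) squares in a line. -/
def ThreeInLine (S : Finset (ℤ × ℤ)) : Prop :=
  ∃ a ∈ S, ∃ b ∈ S, ∃ c ∈ S, a ≠ b ∧ a ≠ c ∧ b ≠ c ∧
    ((a.1 = b.1 ∧ b.1 = c.1) ∨ (a.2 = b.2 ∧ b.2 = c.2) ∨
     (a.1 - a.2 = b.1 - b.2 ∧ b.1 - b.2 = c.1 - c.2) ∨
     (a.1 + a.2 = b.1 + b.2 ∧ b.1 + b.2 = c.1 + c.2))

/-- A good placement on B_n: a subset of the board with no three in a line,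
    such that adding any unoccupied square of the board creates three in a line. -/
def IsGoodPlacement (n : ℕ) (Q : Finset (ℤ × ℤ)) : Prop :=
  Q ⊆ board n ∧ ¬ ThreeInLine Q ∧
    ∀ s ∈ board n, s ∉ Q → ThreeInLine (insert s Q)

/-!
Call a line *full* if it carries two queens of `Q`, and let `m = #Q`. On the grid formed by the
columns and rows that are not full, take `2t - 2` squares with pairwise distinct diagonals and
antidiagonals (non-attacking bishops), `t` being the smaller of the numbers of such columns and
rows. A queen on one of these squares lies outside the full columns, which hold two queens each,
and likewise for rows. An empty one can only be blocked by a full diagonal or antidiagonal, and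
distinct squares use distinct such lines. A full diagonal and a full antidiagonal of the same
parity consist of queens of the same colour, so there are at most `2⌊m/2⌋` full diagonals and
antidiagonals. Altogether `2n ≤ m + 2⌊m/2⌋ + 2`, which forces `m ≥ n` for even `n`.
-/

open Finset

theorem card_le_card_add_card_of_injOn_or {α β γ : Type*} {s : Finset α} {t : Finset β}
    {u : Finset γ} {f : α → β} {g : α → γ} (hf : Set.InjOn f s) (hg : Set.InjOn g s)
    (h : ∀ a ∈ s, f a ∈ t ∨ g a ∈ u) : #s ≤ #t + #u := by
  classical
  rw [← card_filter_add_card_filter_not (fun a => f a ∈ t)]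
  exact add_le_add
    (card_le_card_of_injOn f (fun a ha => (mem_filter.mp ha).2) (hf.mono (filter_subset _ _)))
    (card_le_card_of_injOn g (fun a ha => ((h a (mem_filter.mp ha).1).resolve_left
      (mem_filter.mp ha).2)) (hg.mono (filter_subset _ _)))

section FullLines

variable {α β : Type*} [DecidableEq β]

/-- For `f` the index of a family of lines, the lines carrying at least two squares of `Q`. -/
def fullLines (f : α → β) (Q : Finset α) : Finset β :=
  {v ∈ Q.image f | 2 ≤ #{a ∈ Q | f a = v}}

def ThreeInFiber (f : α → β) (S : Finset α) : Prop :=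
  ∃ a ∈ S, ∃ b ∈ S, ∃ c ∈ S, a ≠ b ∧ a ≠ c ∧ b ≠ c ∧ f a = f b ∧ f b = f c

theorem mem_fullLines {f : α → β} {Q : Finset α} {v : β} :
    v ∈ fullLines f Q ↔ 2 ≤ #{a ∈ Q | f a = v} := by
  refine mem_filter.trans ⟨And.right, fun h => ⟨?_, h⟩⟩
  obtain ⟨a, ha⟩ := card_pos.mp (by omega : 0 < #{a ∈ Q | f a = v})
  exact mem_image.mpr ⟨a, mem_filter.mp ha⟩

theorem two_mul_card_fullLines_le (f : α → β) (Q : Finset α) :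
    2 * #(fullLines f Q) ≤ #{a ∈ Q | f a ∈ fullLines f Q} := by
  rw [card_eq_sum_card_fiberwise (f := f) (s := {a ∈ Q | f a ∈ fullLines f Q})
    (t := fullLines f Q) fun a ha => (mem_filter.mp ha).2, mul_comm, ← smul_eq_mul]
  refine card_nsmul_le_sum _ _ _ fun v hv => ?_
  rw [filter_filter, filter_congr fun a _ => ⟨And.right, fun h => ⟨h ▸ hv, h⟩⟩]
  exact mem_fullLines.mp hv

theorem two_mul_card_fullLines_add_card_le (f : α → β) (Q : Finset α) :
    2 * #(fullLines f Q) + #{a ∈ Q | f a ∉ fullLines f Q} ≤ #Q := by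
  have := two_mul_card_fullLines_le f Q
  have := card_filter_add_card_filter_not (s := Q) (fun a => f a ∈ fullLines f Q)
  omega

theorem filter_fullLines (f : α → β) (Q : Finset α) (p : β → Prop) [DecidablePred p] :
    {v ∈ fullLines f Q | p v} = fullLines f {a ∈ Q | p (f a)} := by
  ext v
  rw [mem_filter, mem_fullLines, mem_fullLines, filter_filter]
  by_cases hv : p v
  · simp only [hv, and_true]
    congr! 3 with a
    exact (and_iff_right_of_imp fun h => h ▸ hv).symm
  · rw [filter_false_of_mem fun a _ (h : p (f a) ∧ f a = v) => hv (h.2 ▸ h.1)]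
    simp [hv]

theorem card_fullLines_le_half_add_half (f : α → β) (Q : Finset α) (p : β → Prop)
    [DecidablePred p] :
    #(fullLines f Q) ≤ #{a ∈ Q | p (f a)} / 2 + #{a ∈ Q | ¬p (f a)} / 2 := by
  have hp := two_mul_card_fullLines_le f {a ∈ Q | p (f a)}
  have hnp := two_mul_card_fullLines_le f {a ∈ Q | ¬p (f a)}
  have := card_filter_le {a ∈ Q | p (f a)} (fun a => f a ∈ fullLines f {a ∈ Q | p (f a)})
  have := card_filter_le {a ∈ Q | ¬p (f a)} (fun a => f a ∈ fullLines f {a ∈ Q | ¬p (f a)})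
  rw [← card_filter_add_card_filter_not p, filter_fullLines, filter_fullLines]
  omega

theorem ThreeInFiber.mem_fullLines_of_insert [DecidableEq α] {f : α → β} {S : Finset α} {z : α}
    (h : ThreeInFiber f (insert z S)) (hS : ¬ThreeInFiber f S) : f z ∈ fullLines f S := by
  obtain ⟨a, ha, b, hb, c, hc, hab, hac, hbc, hfab, hfbc⟩ := h
  refine mem_fullLines.mpr (one_lt_card.mpr ?_)
  simp only [mem_filter, mem_insert] at ha hb hc ⊢
  grind [ThreeInFiber]

end FullLines

def diagIndex (p : ℤ × ℤ) : ℤ := p.1 - p.2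

def antidiagIndex (p : ℤ × ℤ) : ℤ := p.1 + p.2

theorem threeInLine_iff {S : Finset (ℤ × ℤ)} :
    ThreeInLine S ↔ ThreeInFiber Prod.fst S ∨ ThreeInFiber Prod.snd S ∨
      ThreeInFiber diagIndex S ∨ ThreeInFiber antidiagIndex S := by
  constructor
  · rintro ⟨a, ha, b, hb, c, hc, hab, hac, hbc, h | h | h | h⟩
    exacts [.inl ⟨a, ha, b, hb, c, hc, hab, hac, hbc, h⟩,
      .inr (.inl ⟨a, ha, b, hb, c, hc, hab, hac, hbc, h⟩),
      .inr (.inr (.inl ⟨a, ha, b, hb, c, hc, hab, hac, hbc, h⟩)),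
      .inr (.inr (.inr ⟨a, ha, b, hb, c, hc, hab, hac, hbc, h⟩))]
  · rintro (⟨a, ha, b, hb, c, hc, hab, hac, hbc, h⟩ | ⟨a, ha, b, hb, c, hc, hab, hac, hbc, h⟩ |
      ⟨a, ha, b, hb, c, hc, hab, hac, hbc, h⟩ | ⟨a, ha, b, hb, c, hc, hab, hac, hbc, h⟩)
    exacts [⟨a, ha, b, hb, c, hc, hab, hac, hbc, .inl h⟩,
      ⟨a, ha, b, hb, c, hc, hab, hac, hbc, .inr (.inl h)⟩,
      ⟨a, ha, b, hb, c, hc, hab, hac, hbc, .inr (.inr (.inl h))⟩,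
      ⟨a, ha, b, hb, c, hc, hab, hac, hbc, .inr (.inr (.inr h))⟩]

theorem IsGoodPlacement.diagIndex_mem_fullLines_or_antidiagIndex_mem_fullLines {n : ℕ}
    {Q : Finset (ℤ × ℤ)} (hQ : IsGoodPlacement n Q) {z : ℤ × ℤ} (hz : z ∈ board n)
    (hzQ : z ∉ Q) (hcol : z.1 ∉ fullLines Prod.fst Q) (hrow : z.2 ∉ fullLines Prod.snd Q) :
    diagIndex z ∈ fullLines diagIndex Q ∨ antidiagIndex z ∈ fullLines antidiagIndex Q := by
  have hQ3 := hQ.2.1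
  simp only [threeInLine_iff, not_or] at hQ3
  rcases threeInLine_iff.mp (hQ.2.2 z hz hzQ) with h | h | h | h
  · exact absurd (h.mem_fullLines_of_insert hQ3.1) hcol
  · exact absurd (h.mem_fullLines_of_insert hQ3.2.1) hrow
  · exact .inl (h.mem_fullLines_of_insert hQ3.2.2.1)
  · exact .inr (h.mem_fullLines_of_insert hQ3.2.2.2)

/-- Full diagonals and antidiagonals of a given index parity only meet squares of that
colour, and each takes two of them. -/
theorem card_fullLines_diagIndex_add_card_fullLines_antidiagIndex_le (Q : Finset (ℤ × ℤ)) :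
    #(fullLines diagIndex Q) + #(fullLines antidiagIndex Q) ≤ 2 * (#Q / 2) := by
  have hcolour : ∀ p, Even (diagIndex p) ↔ Even (antidiagIndex p) := fun p => by
    simp [diagIndex, antidiagIndex, Int.even_sub, Int.even_add]
  have hD := card_fullLines_le_half_add_half diagIndex Q Even
  have hA := card_fullLines_le_half_add_half antidiagIndex Q Even
  simp only [hcolour] at hD
  have := card_filter_add_card_filter_not (s := Q) (fun p => Even (antidiagIndex p))
  omega

/-- Row `y₀` is taken in full and row `y₁` without the `x` with `x ± (y₁ - y₀) ∈ A`; as `A`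
spreads by at most `y₁ - y₀`, at most one `x` is lost in each direction. -/
theorem exists_bishops_two_rows (A : Finset ℤ) {B : Finset ℤ} {y₀ y₁ : ℤ} (h₀ : y₀ ∈ B)
    (h₁ : y₁ ∈ B) (hlt : y₀ < y₁) (hspread : ∀ x ∈ A, ∀ x' ∈ A, x - x' ≤ y₁ - y₀) :
    ∃ I ⊆ A ×ˢ B, 2 * #A ≤ #I + 2 ∧ Set.InjOn diagIndex I ∧ Set.InjOn antidiagIndex I := by
  set Δ := y₁ - y₀
  set A' := {x ∈ A | x + Δ ∉ A ∧ x - Δ ∉ A}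
  have hup : #{x ∈ A | x + Δ ∈ A} ≤ 1 := card_le_one.mpr fun x hx x' hx' => by
    simp only [mem_filter] at hx hx'
    have := hspread _ hx.2 _ hx'.1
    have := hspread _ hx'.2 _ hx.1
    omega
  have hdown : #{x ∈ A | x - Δ ∈ A} ≤ 1 := card_le_one.mpr fun x hx x' hx' => by
    simp only [mem_filter] at hx hx'
    have := hspread _ hx.1 _ hx'.2
    have := hspread _ hx'.1 _ hx.2
    omega
  have hA' : #A ≤ #A' + 2 := by
    have hsub : A ⊆ A' ∪ {x ∈ A | x + Δ ∈ A} ∪ {x ∈ A | x - Δ ∈ A} := fun x hx => by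
      simp only [A', mem_union, mem_filter]
      tauto
    have := card_le_card hsub
    have := card_union_le (A' ∪ {x ∈ A | x + Δ ∈ A}) {x ∈ A | x - Δ ∈ A}
    have := card_union_le A' {x ∈ A | x + Δ ∈ A}
    omega
  refine ⟨A ×ˢ {y₀} ∪ A' ×ˢ {y₁}, ?_, ?_, ?_, ?_⟩
  · exact union_subset (product_subset_product_right (singleton_subset_iff.mpr h₀))
      (product_subset_product (filter_subset _ _) (singleton_subset_iff.mpr h₁))
  · rw [card_union_of_disjoint (disjoint_product.mpr (.inr (by simpa using hlt.ne))),
      card_product, card_product, card_singleton, card_singleton]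
    omega
  all_goals
    rintro ⟨x, y⟩ hp ⟨x', y'⟩ hp' he
    simp only [A', coe_union, coe_product, coe_singleton, Set.mem_union, Set.mem_prod,
      mem_coe, Set.mem_singleton_iff, mem_filter, diagIndex, antidiagIndex] at hp hp' he
    grind

theorem exists_bishops (A B : Finset ℤ) :
    ∃ I ⊆ A ×ˢ B, 2 * min #A #B ≤ #I + 2 ∧
      Set.InjOn diagIndex I ∧ Set.InjOn antidiagIndex I := by
  rcases le_or_gt #B 1 with hB | hB
  · exact ⟨∅, empty_subset _, by omega, by simp, by simp⟩
  have hB₀ : B.Nonempty := card_pos.mp (by omega)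
  by_cases hA : ∀ x ∈ A, ∀ x' ∈ A, x - x' ≤ B.max' hB₀ - B.min' hB₀
  · obtain ⟨I, hI, hcard, hdiag, hanti⟩ := exists_bishops_two_rows A (B.min'_mem hB₀)
      (B.max'_mem hB₀) (B.min'_lt_max'_of_card hB) hA
    exact ⟨I, hI, by omega, hdiag, hanti⟩
  push Not at hA
  obtain ⟨x, hx, x', hx', hlt⟩ := hA
  have hB' : ∀ y ∈ B, ∀ y' ∈ B, y - y' ≤ x - x' := fun y hy y' hy' => by
    have := B.le_max' y hy
    have := B.min'_le y' hy'
    omega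
  obtain ⟨I, hI, hcard, hdiag, hanti⟩ := exists_bishops_two_rows B hx' hx
    (by have := B.min'_le _ (B.max'_mem hB₀); omega) hB'
  refine ⟨I.image Prod.swap, ?_, ?_, ?_, ?_⟩
  · rw [← image_swap_product]
    exact image_subset_image hI
  · rw [card_image_of_injective _ Prod.swap_injective]
    omega
  · rw [coe_image]
    refine Set.InjOn.image_of_comp fun p hp q hq h => hdiag hp hq ?_
    simp only [Function.comp_apply, Prod.fst_swap, Prod.snd_swap, diagIndex] at h ⊢
    omega
  · rw [coe_image]
    refine Set.InjOn.image_of_comp fun p hp q hq h => hanti hp hq ?_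
    simp only [Function.comp_apply, Prod.fst_swap, Prod.snd_swap, antidiagIndex] at h ⊢
    omega

theorem IsGoodPlacement.two_mul_le {n : ℕ} {Q : Finset (ℤ × ℤ)} (hQ : IsGoodPlacement n Q) :
    2 * n ≤ #Q + 2 * (#Q / 2) + 2 := by
  have hcols := le_card_sdiff (fullLines Prod.fst Q) (Icc (1 : ℤ) n)
  have hrows := le_card_sdiff (fullLines Prod.snd Q) (Icc (1 : ℤ) n)
  simp only [Int.card_Icc, add_sub_cancel_right, Int.toNat_natCast] at hcols hrows
  set cols := Icc (1 : ℤ) n \ fullLines Prod.fst Q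
  set rows := Icc (1 : ℤ) n \ fullLines Prod.snd Q
  obtain ⟨I, hI, hIcard, hdiag, hanti⟩ := exists_bishops cols rows
  have hIboard : I ⊆ board n := hI.trans (product_subset_product sdiff_subset sdiff_subset)
  have hqueens_cols : #(I ∩ Q) ≤ #{q ∈ Q | q.1 ∉ fullLines Prod.fst Q} :=
    card_le_card fun q hq => mem_filter.mpr ⟨(mem_inter.mp hq).2,
      (mem_sdiff.mp (mem_product.mp (hI (mem_inter.mp hq).1)).1).2⟩
  have hqueens_rows : #(I ∩ Q) ≤ #{q ∈ Q | q.2 ∉ fullLines Prod.snd Q} :=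
    card_le_card fun q hq => mem_filter.mpr ⟨(mem_inter.mp hq).2,
      (mem_sdiff.mp (mem_product.mp (hI (mem_inter.mp hq).1)).2).2⟩
  have hempty : #(I \ Q) ≤ #(fullLines diagIndex Q) + #(fullLines antidiagIndex Q) := by
    refine card_le_card_add_card_of_injOn_or (hdiag.mono sdiff_subset)
      (hanti.mono sdiff_subset) fun z hz => ?_
    obtain ⟨hzI, hzQ⟩ := mem_sdiff.mp hz
    obtain ⟨hcol, hrow⟩ := mem_product.mp (hI hzI)
    exact hQ.diagIndex_mem_fullLines_or_antidiagIndex_mem_fullLines (hIboard hzI) hzQ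
      (mem_sdiff.mp hcol).2 (mem_sdiff.mp hrow).2
  have hfull_cols := two_mul_card_fullLines_add_card_le Prod.fst Q
  have hfull_rows := two_mul_card_fullLines_add_card_le Prod.snd Q
  have hfull_diags := card_fullLines_diagIndex_add_card_fullLines_antidiagIndex_le Q
  have hsplit := card_sdiff_add_card_inter I Q
  omega

theorem stmt_3 (k n : ℕ) (hn : n = 4 * k + 2)
    (Q : Finset (ℤ × ℤ)) (hQ : IsGoodPlacement n Q) : n ≤ Q.card := by
  have := hQ.two_mul_le
  omega
end

section
/- For every even integer n ≥ 2, every good placement of queens on the n × n board B_n has size at least n. -/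
/-! Suppose `#Q < n`. Call a line *full* if it carries two queens; saturation says that every
empty square lies on a full line. Fewer than `n` queens fill fewer than `n / 2` columns, so there
are two non-full columns; let `x₁ < x₂` be the outermost ones and `y₁ < y₂` the outermost non-full
rows. A full line is not a side of the rectangle `[x₁, x₂] × [y₁, y₂]`, so it meets the boundary
of the rectangle in at most two squares. Each empty boundary square is counted by the two queens
of a full line through it; counting instead per queen and direction, the `2 (n - x₂ + x₁ - 1)`
queens in the full columns outside the rectangle contribute nothing along their column, and
likewise for rows. This gives `4 (n - 1) + e ≤ 4 #Q`, where `e` counts the queens in non-full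
columns. Hence `#Q = n - 1` and every column is full or empty, so `#Q` is even, contradicting the
parity of `n`. -/

open Finset

theorem sum_add_mul_card_le_mul_card {α : Type*} [DecidableEq α] {s t : Finset α} {f : α → ℕ}
    {c : ℕ} (hts : t ⊆ s) (hs : ∀ a ∈ s \ t, f a ≤ c) (ht : ∀ a ∈ t, f a = 0) :
    ∑ a ∈ s, f a + c * #t ≤ c * #s := by
  rw [← sum_sdiff hts, sum_eq_zero ht, add_zero]
  calc ∑ a ∈ s \ t, f a + c * #t ≤ c * #(s \ t) + c * #t := by
        gcongr
        simpa [mul_comm] using sum_le_card_nsmul _ _ c hs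
    _ = c * #s := by rw [← mul_add, card_sdiff_add_card_eq_card hts]

def lineCoord : Fin 4 → ℤ × ℤ → ℤ
  | 0, c => c.1
  | 1, c => c.2
  | 2, c => c.1 - c.2
  | 3, c => c.1 + c.2

def lineSquares (S : Finset (ℤ × ℤ)) (i : Fin 4) (v : ℤ) : Finset (ℤ × ℤ) :=
  S.filter fun c => lineCoord i c = v

theorem mem_lineSquares {S : Finset (ℤ × ℤ)} {i : Fin 4} {v : ℤ} {c : ℤ × ℤ} :
    c ∈ lineSquares S i v ↔ c ∈ S ∧ lineCoord i c = v :=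
  mem_filter

abbrev IsFullLine (Q : Finset (ℤ × ℤ)) (i : Fin 4) (v : ℤ) : Prop :=
  #(lineSquares Q i v) = 2

theorem threeInLine_iff_s6 {S : Finset (ℤ × ℤ)} :
    ThreeInLine S ↔ ∃ i v, 2 < #(lineSquares S i v) := by
  simp only [lineSquares, two_lt_card, mem_filter]
  constructor
  · rintro ⟨a, ha, b, hb, c, hc, hab, hac, hbc, h⟩
    obtain ⟨i, hab', hbc'⟩ :
        ∃ i, lineCoord i a = lineCoord i b ∧ lineCoord i b = lineCoord i c := by
      rcases h with h | h | h | h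
      exacts [⟨0, h⟩, ⟨1, h⟩, ⟨2, h⟩, ⟨3, h⟩]
    exact ⟨i, _, a, ⟨ha, rfl⟩, b, ⟨hb, hab'.symm⟩, c, ⟨hc, (hab'.trans hbc').symm⟩, hab, hac, hbc⟩
  · rintro ⟨i, v, a, ⟨ha, hav⟩, b, ⟨hb, hbv⟩, c, ⟨hc, hcv⟩, hab, hac, hbc⟩
    refine ⟨a, ha, b, hb, c, hc, hab, hac, hbc, ?_⟩
    fin_cases i <;> simp only [lineCoord] at hav hbv hcv <;> omega

theorem card_lineSquares_le_two {S : Finset (ℤ × ℤ)} (h : ¬ThreeInLine S) (i : Fin 4) (v : ℤ) :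
    #(lineSquares S i v) ≤ 2 :=
  not_lt.mp fun h3 => h (threeInLine_iff_s6.mpr ⟨i, v, h3⟩)

theorem exists_isFullLine_of_threeInLine_insert {Q : Finset (ℤ × ℤ)} {s : ℤ × ℤ}
    (hQ : ¬ThreeInLine Q) (hs : s ∉ Q) (h : ThreeInLine (insert s Q)) :
    ∃ i, IsFullLine Q i (lineCoord i s) := by
  obtain ⟨i, v, hv⟩ := threeInLine_iff_s6.mp h
  have hle := card_lineSquares_le_two hQ i v
  unfold lineSquares at hv
  by_cases hsv : lineCoord i s = v
  · subst hsv
    rw [filter_insert, if_pos rfl, card_insert_of_notMem (by simp [hs])] at hv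
    exact ⟨i, le_antisymm hle (Nat.lt_succ_iff.mp hv)⟩
  · rw [filter_insert, if_neg hsv] at hv
    exact absurd hle (not_le.mpr hv)

theorem card_filter_lineCoord_mem (Q : Finset (ℤ × ℤ)) (i : Fin 4) (t : Finset ℤ) :
    #(Q.filter fun q => lineCoord i q ∈ t) = ∑ v ∈ t, #(lineSquares Q i v) :=
  (sum_card_fiberwise_eq_card_filter Q t (lineCoord i)).symm

theorem card_filter_lineCoord_mem_of_isFullLine {Q : Finset (ℤ × ℤ)} {i : Fin 4} {t : Finset ℤ}
    (ht : ∀ v ∈ t, IsFullLine Q i v) : #(Q.filter fun q => lineCoord i q ∈ t) = 2 * #t := by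
  rw [card_filter_lineCoord_mem, sum_const_nat ht, mul_comm]

theorem even_card_of_forall_isFullLine {Q : Finset (ℤ × ℤ)} {i : Fin 4}
    (h : ∀ q ∈ Q, IsFullLine Q i (lineCoord i q)) : Even #Q := by
  have hall := card_filter_lineCoord_mem_of_isFullLine (t := Q.image (lineCoord i))
    (forall_mem_image.2 h)
  rw [filter_true_of_mem fun q hq => mem_image_of_mem _ hq] at hall
  exact ⟨_, hall.trans (two_mul _)⟩

theorem two_mul_card_filter_isFullLine_le (Q : Finset (ℤ × ℤ)) (i : Fin 4) (t : Finset ℤ) :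
    2 * #(t.filter (IsFullLine Q i)) ≤ #Q := by
  rw [← card_filter_lineCoord_mem_of_isFullLine fun v hv => (mem_filter.mp hv).2]
  exact card_filter_le _ _

section Rectangle

variable {x₁ x₂ y₁ y₂ : ℤ}

noncomputable def rectBoundary (x₁ x₂ y₁ y₂ : ℤ) : Finset (ℤ × ℤ) :=
  (Icc x₁ x₂ ×ˢ Icc y₁ y₂).filter fun c => c.1 = x₁ ∨ c.1 = x₂ ∨ c.2 = y₁ ∨ c.2 = y₂

theorem mem_rectBoundary {c : ℤ × ℤ} :
    c ∈ rectBoundary x₁ x₂ y₁ y₂ ↔ (x₁ ≤ c.1 ∧ c.1 ≤ x₂ ∧ y₁ ≤ c.2 ∧ c.2 ≤ y₂) ∧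
      (c.1 = x₁ ∨ c.1 = x₂ ∨ c.2 = y₁ ∨ c.2 = y₂) := by
  simp only [rectBoundary, mem_filter, mem_product, mem_Icc, and_assoc]

theorem card_rectBoundary (hx : x₁ < x₂) (hy : y₁ < y₂) :
    (#(rectBoundary x₁ x₂ y₁ y₂) : ℤ) = 2 * (x₂ - x₁) + 2 * (y₂ - y₁) := by
  have hsub : Icc (x₁ + 1) (x₂ - 1) ×ˢ Icc (y₁ + 1) (y₂ - 1) ⊆ Icc x₁ x₂ ×ˢ Icc y₁ y₂ :=
    product_subset_product (Icc_subset_Icc (by omega) (by omega))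
      (Icc_subset_Icc (by omega) (by omega))
  have hinner : rectBoundary x₁ x₂ y₁ y₂ =
      Icc x₁ x₂ ×ˢ Icc y₁ y₂ \ Icc (x₁ + 1) (x₂ - 1) ×ˢ Icc (y₁ + 1) (y₂ - 1) := by
    ext c
    simp only [rectBoundary, mem_filter, mem_sdiff, mem_product, mem_Icc]
    omega
  rw [hinner, card_sdiff_of_subset hsub, Nat.cast_sub (card_le_card hsub)]
  simp only [card_product, Int.card_Icc, Nat.cast_mul]
  rw [Int.toNat_of_nonneg (by omega), Int.toNat_of_nonneg (by omega),
    Int.toNat_of_nonneg (by omega), Int.toNat_of_nonneg (by omega)]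
  ring

theorem card_lineSquares_rectBoundary_le_two {i : Fin 4} {v : ℤ}
    (h₀ : i = 0 → v ≠ x₁ ∧ v ≠ x₂) (h₁ : i = 1 → v ≠ y₁ ∧ v ≠ y₂) :
    #(lineSquares (rectBoundary x₁ x₂ y₁ y₂) i v) ≤ 2 := by
  suffices ∃ p q, lineSquares (rectBoundary x₁ x₂ y₁ y₂) i v ⊆ {p, q} by
    obtain ⟨p, q, h⟩ := this
    exact (card_le_card h).trans card_le_two
  fin_cases i
  · refine ⟨(v, y₁), (v, y₂), fun c hc => ?_⟩
    simp only [mem_lineSquares, mem_rectBoundary, lineCoord] at hc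
    simp only [mem_insert, mem_singleton, Prod.ext_iff]
    have := h₀ rfl
    omega
  · refine ⟨(x₁, v), (x₂, v), fun c hc => ?_⟩
    simp only [mem_lineSquares, mem_rectBoundary, lineCoord] at hc
    simp only [mem_insert, mem_singleton, Prod.ext_iff]
    have := h₁ rfl
    omega
  · refine ⟨(max x₁ (y₁ + v), max x₁ (y₁ + v) - v), (min x₂ (y₂ + v), min x₂ (y₂ + v) - v),
      fun c hc => ?_⟩
    simp only [mem_lineSquares, mem_rectBoundary, lineCoord] at hc
    simp only [mem_insert, mem_singleton, Prod.ext_iff]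
    omega
  · refine ⟨(max x₁ (v - y₂), v - max x₁ (v - y₂)), (min x₂ (v - y₁), v - min x₂ (v - y₁)),
      fun c hc => ?_⟩
    simp only [mem_lineSquares, mem_rectBoundary, lineCoord] at hc
    simp only [mem_insert, mem_singleton, Prod.ext_iff]
    omega

end Rectangle

structure OuterNonfull (n : ℕ) (Q : Finset (ℤ × ℤ)) (i : Fin 4) (a b : ℤ) : Prop where
  one_le : 1 ≤ a
  lt : a < b
  le : b ≤ n
  not_full_left : ¬IsFullLine Q i a
  not_full_right : ¬IsFullLine Q i b
  full_of_mem_sdiff : ∀ v ∈ Icc 1 (n : ℤ) \ Icc a b, IsFullLine Q i v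

theorem exists_outerNonfull {n : ℕ} (Q : Finset (ℤ × ℤ)) (i : Fin 4) (hQ : #Q + 3 ≤ 2 * n) :
    ∃ a b, OuterNonfull n Q i a b := by
  have hfull := two_mul_card_filter_isFullLine_le Q i (Icc 1 n)
  have hsplit := card_filter_add_card_filter_not (s := Icc (1 : ℤ) n) (p := IsFullLine Q i)
  set N := (Icc 1 (n : ℤ)).filter fun v => ¬IsFullLine Q i v
  rw [Int.card_Icc] at hsplit
  have hN : 1 < #N := by omega
  have hne : N.Nonempty := card_pos.mp (by omega)
  obtain ⟨hmin, hmin'⟩ := mem_filter.mp (N.min'_mem hne)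
  obtain ⟨hmax, hmax'⟩ := mem_filter.mp (N.max'_mem hne)
  refine ⟨N.min' hne, N.max' hne, (mem_Icc.mp hmin).1, N.min'_lt_max'_of_card hN,
    (mem_Icc.mp hmax).2, hmin', hmax', fun v hv => ?_⟩
  by_contra hv'
  obtain ⟨hv1, hv2⟩ := mem_sdiff.mp hv
  have hvN : v ∈ N := mem_filter.mpr ⟨hv1, hv'⟩
  exact hv2 (mem_Icc.mpr ⟨N.min'_le v hvN, N.le_max' v hvN⟩)

theorem OuterNonfull.card_filter_outside {n : ℕ} {Q : Finset (ℤ × ℤ)} {i : Fin 4} {a b : ℤ}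
    (h : OuterNonfull n Q i a b) :
    (#(Q.filter fun q => lineCoord i q ∈ Icc 1 (n : ℤ) \ Icc a b) : ℤ) =
      2 * (n - 1 - (b - a)) := by
  rw [card_filter_lineCoord_mem_of_isFullLine h.full_of_mem_sdiff,
    card_sdiff_of_subset (Icc_subset_Icc h.one_le h.le), Int.card_Icc, Int.card_Icc]
  have := h.one_le
  have := h.lt
  have := h.le
  omega

section Counting

variable {n : ℕ} {Q : Finset (ℤ × ℤ)} {x₁ x₂ y₁ y₂ : ℤ}

abbrev OnFullLineThrough (Q : Finset (ℤ × ℤ)) (c : ℤ × ℤ) (p : Fin 4 × (ℤ × ℤ)) : Prop :=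
  IsFullLine Q p.1 (lineCoord p.1 p.2) ∧ lineCoord p.1 c = lineCoord p.1 p.2

theorem two_le_card_bipartiteAbove (hQ : IsGoodPlacement n Q) {c : ℤ × ℤ} (hc : c ∈ board n)
    (hcQ : c ∉ Q) : 2 ≤ #((univ ×ˢ Q).bipartiteAbove (OnFullLineThrough Q) c) := by
  obtain ⟨i, hi⟩ := exists_isFullLine_of_threeInLine_insert hQ.2.1 hcQ (hQ.2.2 c hc hcQ)
  calc 2 = #({i} ×ˢ lineSquares Q i (lineCoord i c)) := by rw [card_product, card_singleton, hi]
    _ ≤ _ := by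
      refine card_le_card fun ⟨j, q⟩ hp => ?_
      simp only [mem_product, mem_singleton, mem_lineSquares] at hp
      obtain ⟨rfl, hqQ, hqc⟩ := hp
      exact (mem_bipartiteAbove _).mpr ⟨mem_product.mpr ⟨mem_univ _, hqQ⟩, hqc ▸ hi, hqc.symm⟩

theorem card_bipartiteBelow_add_ite_le_two (hcol : OuterNonfull n Q 0 x₁ x₂)
    (hrow : OuterNonfull n Q 1 y₁ y₂) (i : Fin 4) {q : ℤ × ℤ} (hq : q ∈ Q) :
    #((rectBoundary x₁ x₂ y₁ y₂ \ Q).bipartiteBelow (OnFullLineThrough Q) (i, q)) +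
      (if q ∈ rectBoundary x₁ x₂ y₁ y₂ then 1 else 0) ≤ 2 := by
  by_cases hfull : IsFullLine Q i (lineCoord i q)
  swap
  · rw [show (rectBoundary x₁ x₂ y₁ y₂ \ Q).bipartiteBelow (OnFullLineThrough Q) (i, q) = ∅ from
      filter_false_of_mem fun c _ h => hfull h.1]
    split_ifs <;> simp
  have hL : #(lineSquares (rectBoundary x₁ x₂ y₁ y₂) i (lineCoord i q)) ≤ 2 :=
    card_lineSquares_rectBoundary_le_two
    (fun hi => by subst hi; exact ⟨fun h => hcol.not_full_left (h ▸ hfull),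
      fun h => hcol.not_full_right (h ▸ hfull)⟩)
    (fun hi => by subst hi; exact ⟨fun h => hrow.not_full_left (h ▸ hfull),
      fun h => hrow.not_full_right (h ▸ hfull)⟩)
  have hsub : (rectBoundary x₁ x₂ y₁ y₂ \ Q).bipartiteBelow (OnFullLineThrough Q) (i, q) ⊆
      (lineSquares (rectBoundary x₁ x₂ y₁ y₂) i (lineCoord i q)).erase q := fun c hc => by
    obtain ⟨hcD, -, hcq⟩ := (mem_bipartiteBelow _).mp hc
    obtain ⟨hcR, hcQ⟩ := mem_sdiff.mp hcD
    exact mem_erase.mpr ⟨fun h => hcQ (h ▸ hq), mem_lineSquares.mpr ⟨hcR, hcq⟩⟩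
  have hle := card_le_card hsub
  split_ifs with hqR
  · rw [card_erase_of_mem (mem_lineSquares.mpr ⟨hqR, rfl⟩)] at hle
    omega
  · rw [erase_eq_of_notMem fun h => hqR (mem_lineSquares.mp h).1] at hle
    omega

theorem card_bipartiteBelow_le_two (hcol : OuterNonfull n Q 0 x₁ x₂)
    (hrow : OuterNonfull n Q 1 y₁ y₂) (i : Fin 4) {q : ℤ × ℤ} (hq : q ∈ Q) :
    #((rectBoundary x₁ x₂ y₁ y₂ \ Q).bipartiteBelow (OnFullLineThrough Q) (i, q)) ≤ 2 :=
  (Nat.le_add_right _ _).trans (card_bipartiteBelow_add_ite_le_two hcol hrow i hq)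

theorem bipartiteBelow_subset_lineSquares (i : Fin 4) (q : ℤ × ℤ) :
    (rectBoundary x₁ x₂ y₁ y₂ \ Q).bipartiteBelow (OnFullLineThrough Q) (i, q) ⊆
      lineSquares (rectBoundary x₁ x₂ y₁ y₂) i (lineCoord i q) := fun c hc => by
  obtain ⟨hcD, -, hcq⟩ := (mem_bipartiteBelow _).mp hc
  exact mem_lineSquares.mpr ⟨(mem_sdiff.mp hcD).1, hcq⟩

theorem sum_card_bipartiteBelow_add_card_inter_le (hcol : OuterNonfull n Q 0 x₁ x₂)
    (hrow : OuterNonfull n Q 1 y₁ y₂) (i : Fin 4) :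
    ∑ q ∈ Q, #((rectBoundary x₁ x₂ y₁ y₂ \ Q).bipartiteBelow (OnFullLineThrough Q) (i, q)) +
      #(rectBoundary x₁ x₂ y₁ y₂ ∩ Q) ≤ 2 * #Q := by
  rw [inter_comm, ← filter_mem_eq_inter, card_filter, ← sum_add_distrib, mul_comm, ← smul_eq_mul]
  exact sum_le_card_nsmul _ _ _ fun q hq => card_bipartiteBelow_add_ite_le_two hcol hrow i hq

theorem sum_card_bipartiteBelow_col_add_le (hcol : OuterNonfull n Q 0 x₁ x₂)
    (hrow : OuterNonfull n Q 1 y₁ y₂) :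
    ∑ q ∈ Q, #((rectBoundary x₁ x₂ y₁ y₂ \ Q).bipartiteBelow (OnFullLineThrough Q) (0, q)) +
      2 * (#(Q.filter fun q => lineCoord 0 q ∈ Icc 1 (n : ℤ) \ Icc x₁ x₂) +
        #(Q.filter fun q => ¬IsFullLine Q 0 (lineCoord 0 q))) ≤ 2 * #Q := by
  have hdisj : Disjoint (Q.filter fun q => lineCoord 0 q ∈ Icc 1 (n : ℤ) \ Icc x₁ x₂)
      (Q.filter fun q => ¬IsFullLine Q 0 (lineCoord 0 q)) :=
    disjoint_filter_filter' _ _ fun _ hout hnf q hq =>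
      hnf q hq (hcol.full_of_mem_sdiff _ (hout q hq))
  rw [← card_union_of_disjoint hdisj]
  refine sum_add_mul_card_le_mul_card (union_subset (filter_subset _ _) (filter_subset _ _))
    (fun q hq => card_bipartiteBelow_le_two hcol hrow 0 (mem_sdiff.mp hq).1) fun q hq => ?_
  rw [card_eq_zero, ← subset_empty]
  rcases mem_union.mp hq with hq | hq
  · obtain ⟨-, hout⟩ := mem_filter.mp hq
    refine (bipartiteBelow_subset_lineSquares 0 q).trans fun c hc => ?_
    simp only [mem_lineSquares, mem_rectBoundary, lineCoord, mem_sdiff, mem_Icc] at hc hout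
    omega
  · obtain ⟨-, hnf⟩ := mem_filter.mp hq
    exact fun c hc => absurd ((mem_bipartiteBelow _).mp hc).2.1 hnf

theorem sum_card_bipartiteBelow_row_add_le (hcol : OuterNonfull n Q 0 x₁ x₂)
    (hrow : OuterNonfull n Q 1 y₁ y₂) :
    ∑ q ∈ Q, #((rectBoundary x₁ x₂ y₁ y₂ \ Q).bipartiteBelow (OnFullLineThrough Q) (1, q)) +
      2 * #(Q.filter fun q => lineCoord 1 q ∈ Icc 1 (n : ℤ) \ Icc y₁ y₂) ≤ 2 * #Q := by
  refine sum_add_mul_card_le_mul_card (filter_subset _ _)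
    (fun q hq => card_bipartiteBelow_le_two hcol hrow 1 (mem_sdiff.mp hq).1) fun q hq => ?_
  rw [card_eq_zero, ← subset_empty]
  obtain ⟨-, hout⟩ := mem_filter.mp hq
  refine (bipartiteBelow_subset_lineSquares 1 q).trans fun c hc => ?_
  simp only [mem_lineSquares, mem_rectBoundary, lineCoord, mem_sdiff, mem_Icc] at hc hout
  omega

theorem rectBoundary_subset_board (hcol : OuterNonfull n Q 0 x₁ x₂)
    (hrow : OuterNonfull n Q 1 y₁ y₂) : rectBoundary x₁ x₂ y₁ y₂ ⊆ board n := fun c hc => by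
  have := hcol.one_le; have := hcol.le; have := hrow.one_le; have := hrow.le
  rw [mem_rectBoundary] at hc
  simp only [board, mem_product, mem_Icc]
  omega

theorem two_mul_card_sdiff_le_sum (hQ : IsGoodPlacement n Q) (hcol : OuterNonfull n Q 0 x₁ x₂)
    (hrow : OuterNonfull n Q 1 y₁ y₂) :
    2 * #(rectBoundary x₁ x₂ y₁ y₂ \ Q) ≤ ∑ i, ∑ q ∈ Q,
      #((rectBoundary x₁ x₂ y₁ y₂ \ Q).bipartiteBelow (OnFullLineThrough Q) (i, q)) := by
  rw [← sum_product (f := fun p => #((rectBoundary x₁ x₂ y₁ y₂ \ Q).bipartiteBelow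
    (OnFullLineThrough Q) p)), ← sum_card_bipartiteAbove_eq_sum_card_bipartiteBelow,
    mul_comm, ← smul_eq_mul]
  refine card_nsmul_le_sum _ _ _ fun c hc => ?_
  obtain ⟨hcR, hcQ⟩ := mem_sdiff.mp hc
  exact two_le_card_bipartiteAbove hQ (rectBoundary_subset_board hcol hrow hcR) hcQ

theorem four_mul_add_card_filter_not_isFullLine_le (hQ : IsGoodPlacement n Q)
    (hcol : OuterNonfull n Q 0 x₁ x₂) (hrow : OuterNonfull n Q 1 y₁ y₂) :
    4 * n + #(Q.filter fun q => ¬IsFullLine Q 0 (lineCoord 0 q)) ≤ 4 * #Q + 4 := by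
  have hdouble := two_mul_card_sdiff_le_sum hQ hcol hrow
  rw [Fin.sum_univ_four] at hdouble
  have h0 := sum_card_bipartiteBelow_col_add_le hcol hrow
  have h1 := sum_card_bipartiteBelow_row_add_le hcol hrow
  have h2 := sum_card_bipartiteBelow_add_card_inter_le hcol hrow 2
  have h3 := sum_card_bipartiteBelow_add_card_inter_le hcol hrow 3
  have hsplit := card_sdiff_add_card_inter (rectBoundary x₁ x₂ y₁ y₂) Q
  have hR := card_rectBoundary hcol.lt hrow.lt
  have hcols := hcol.card_filter_outside
  have hrows := hrow.card_filter_outside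
  omega

end Counting

theorem stmt_6_general (n : ℕ) (heven : Even n)
    (Q : Finset (ℤ × ℤ)) (hQ : IsGoodPlacement n Q) : n ≤ Q.card := by
  by_contra! hlt
  have hcard : #Q + 3 ≤ 2 * n := by obtain ⟨k, rfl⟩ := heven; omega
  obtain ⟨x₁, x₂, hcol⟩ := exists_outerNonfull Q 0 hcard
  obtain ⟨y₁, y₂, hrow⟩ := exists_outerNonfull Q 1 hcard
  have hbound := four_mul_add_card_filter_not_isFullLine_le hQ hcol hrow
  have hfull : ∀ q ∈ Q, IsFullLine Q 0 (lineCoord 0 q) := by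
    have : Q.filter (fun q => ¬IsFullLine Q 0 (lineCoord 0 q)) = ∅ := card_eq_zero.mp (by omega)
    simpa [filter_eq_empty_iff] using this
  obtain ⟨k, hk⟩ := even_card_of_forall_isFullLine hfull
  obtain ⟨m, rfl⟩ := heven
  omega

theorem stmt_6 (n : ℕ) (hn : 2 ≤ n) (heven : Even n)
    (Q : Finset (ℤ × ℤ)) (hQ : IsGoodPlacement n Q) : n ≤ Q.card :=
  stmt_6_general n heven Q hQ
end
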